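/- arXiv:2305.19620 — 3 statements merged into one kernel-verified Lean document; each statement's English description precedes it below -/
import Mathlib

section
/- If W is a mixed resolving set of a connected graph G and v is a cut vertex of G, then W \ {v} is also a mixed resolving set of G. -/
open SimpleGraph

variable {V : Type*}

/-- Distance from a vertex `w` to an (unordered) edge `e`:
the minimum of the distances to the two endpoints. -/
noncomputable def edgeVertexDist (G : SimpleGraph V) (w : V) (e : Sym2 V) : ℕ :=
  Sym2.lift ⟨fun a b => min (G.dist a w) (G.dist b w), fun a b => by simp [min_comm]⟩ e

/-- Distance from a vertex `w` to a mixed element (vertex or edge). -/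
noncomputable def mixedDist (G : SimpleGraph V) (w : V) : V ⊕ G.edgeSet → ℕ
  | Sum.inl v => G.dist v w
  | Sum.inr e => edgeVertexDist G w e.val

/-- `W` is a mixed resolving set: every two distinct mixed elements are
distinguished by the distance to some vertex of `W`. -/
def IsMixedResolving (G : SimpleGraph V) (W : Set V) : Prop :=
  ∀ x y : V ⊕ G.edgeSet, x ≠ y → ∃ w ∈ W, mixedDist G w x ≠ mixedDist G w y

/-- The mixed metric dimension of a finite graph. -/
noncomputable def mdim [Fintype V] (G : SimpleGraph V) : ℕ :=
  sInf {n | ∃ W : Finset V, W.card = n ∧ IsMixedResolving G ↑W}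

/-- `y` is a maximal neighbor of `x`: `y` is a neighbor of `x` adjacent to
every neighbor of `x` other than `y` itself. -/
def IsMaxNeighbor (G : SimpleGraph V) (x y : V) : Prop :=
  G.Adj x y ∧ ∀ z, G.Adj x z → z ≠ y → G.Adj y z

/-- `v` is a cut vertex of `G`: deleting `v` disconnects the graph. -/
def IsCutVertex (G : SimpleGraph V) (v : V) : Prop :=
  ¬ (G.induce {w | w ≠ v}).Connected


lemma reach_of_walk_avoid (G : SimpleGraph V) (v : V) :
    ∀ {a b : V} (p : G.Walk a b) (_ : ∀ x ∈ p.support, x ≠ v)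
      (ha : a ≠ v) (hb : b ≠ v),
    (G.induce {w | w ≠ v}).Reachable ⟨a, ha⟩ ⟨b, hb⟩ := by
  intro a b p
  induction p with
  | nil => intro _ ha hb; exact Reachable.refl _
  | @cons u c d h q ih =>
    intro hp ha hb
    have hc : c ≠ v := hp c (by simp)
    have hq : ∀ x ∈ q.support, x ≠ v := fun x hx => hp x (by simp [hx])
    exact (Adj.reachable (by exact h : (G.induce {w | w ≠ v}).Adj ⟨u, ha⟩ ⟨c, hc⟩)).trans
      (ih hq hc hb)

/-- If `a, b ≠ v` and they are not reachable in `G - v`, then every walk from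
`a` to `b` in `G` goes through `v`. -/
lemma mem_support_of_not_reach (G : SimpleGraph V) {v a b : V} (ha : a ≠ v) (hb : b ≠ v)
    (h : ¬ (G.induce {w | w ≠ v}).Reachable ⟨a, ha⟩ ⟨b, hb⟩) (p : G.Walk a b) :
    v ∈ p.support := by
  by_contra hvp
  exact h (reach_of_walk_avoid G v p (fun x hx hxv => hvp (hxv ▸ hx)) ha hb)

/-- Distance additivity through a cut vertex. -/
lemma dist_add_of_not_reach (G : SimpleGraph V) (hG : G.Connected) {v a b : V}
    (ha : a ≠ v) (hb : b ≠ v)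
    (h : ¬ (G.induce {w | w ≠ v}).Reachable ⟨a, ha⟩ ⟨b, hb⟩) :
    G.dist a b = G.dist a v + G.dist v b := by
  classical
  refine le_antisymm (hG.dist_triangle) ?_
  obtain ⟨p, hp⟩ := hG.exists_walk_length_eq_dist a b
  have hv : v ∈ p.support := mem_support_of_not_reach G ha hb h p
  calc G.dist a v + G.dist v b
      ≤ (p.takeUntil v hv).length + (p.dropUntil v hv).length :=
        Nat.add_le_add (dist_le _) (dist_le _)
    _ = p.length := by rw [← Walk.length_append, p.take_spec hv]
    _ = G.dist a b := hp

/-- If `d(a,w) < d(v,w)` then `a` and `w` are reachable in `G - v`. -/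
lemma reach_of_dist_lt (G : SimpleGraph V) (hG : G.Connected) {v a w : V}
    (ha : a ≠ v) (hlt : G.dist a w < G.dist v w) :
    ∃ hw : w ≠ v, (G.induce {x | x ≠ v}).Reachable ⟨a, ha⟩ ⟨w, hw⟩ := by
  have hw : w ≠ v := by rintro rfl; simp [SimpleGraph.dist_self] at hlt
  refine ⟨hw, ?_⟩
  by_contra h
  have := dist_add_of_not_reach G hG ha (by exact hw) h  -- dist a w = dist a v + dist v w
  omega

/-- Every vertex `u ≠ v` has a neighbor of `v` in its component of `G - v`. -/
lemma exists_adj_reach (G : SimpleGraph V) (hG : G.Connected) {v u : V} (hu : u ≠ v) :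
    ∃ (u' : V) (hu' : u' ≠ v), G.Adj v u' ∧
      (G.induce {x | x ≠ v}).Reachable ⟨u, hu⟩ ⟨u', hu'⟩ := by
  classical
  obtain ⟨p0⟩ := (hG v u)
  obtain ⟨p, hp⟩ := p0.toPath
  cases p with
  | nil => exact absurd rfl hu
  | @cons _ u' _ h q =>
    have hnd := hp.support_nodup
    rw [Walk.support_cons, List.nodup_cons] at hnd
    have hvq : v ∉ q.support := hnd.1
    have hu' : u' ≠ v := fun hh => hvq (hh ▸ q.start_mem_support)
    exact ⟨u', hu', h, (reach_of_walk_avoid G v q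
      (fun x hx hxv => hvq (hxv ▸ hx)) hu' hu).symm⟩

lemma edgeVertexDist_mk (G : SimpleGraph V) (w a b : V) :
    edgeVertexDist G w s(a, b) = min (G.dist a w) (G.dist b w) := rfl

/-- Triangle inequality for the mixed distance. -/
lemma mixed_triangle (G : SimpleGraph V) (hG : G.Connected) (v w : V)
    (x : V ⊕ G.edgeSet) :
    mixedDist G w x ≤ mixedDist G v x + G.dist v w := by
  cases x with
  | inl u =>
    simpa [mixedDist] using hG.dist_triangle (u := u) (v := v) (w := w)
  | inr e =>
    obtain ⟨e, he⟩ := e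
    induction e using Sym2.ind with
    | _ a b =>
      simp only [mixedDist, edgeVertexDist_mk]
      calc min (G.dist a w) (G.dist b w)
          ≤ min (G.dist a v + G.dist v w) (G.dist b v + G.dist v w) :=
            min_le_min hG.dist_triangle hG.dist_triangle
        _ = min (G.dist a v) (G.dist b v) + G.dist v w := by
            omega

/-- A mixed resolving set meets the component of `G - v` of every vertex. -/
lemma W_hits (G : SimpleGraph V) (hG : G.Connected) (W : Set V)
    (hW : IsMixedResolving G W) (v : V) {u : V} (hu : u ≠ v) :
    ∃ w, w ∈ W ∧ ∃ hw : w ≠ v,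
      (G.induce {x | x ≠ v}).Reachable ⟨u, hu⟩ ⟨w, hw⟩ := by
  obtain ⟨u', hu', hadj, hreach⟩ := exists_adj_reach G hG hu
  have he : s(v, u') ∈ G.edgeSet := hadj
  obtain ⟨w, hwW, hne⟩ := hW (Sum.inl v) (Sum.inr ⟨s(v, u'), he⟩) (by simp)
  simp only [mixedDist, edgeVertexDist_mk] at hne
  have hlt : G.dist u' w < G.dist v w := by
    by_contra hle
    push_neg at hle
    exact hne (min_eq_left hle).symm
  obtain ⟨hw, hr⟩ := reach_of_dist_lt G hG hu' hlt
  exact ⟨w, hwW, hw, hreach.trans hr⟩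

lemma key (G : SimpleGraph V) (hG : G.Connected) (W : Set V)
    (hW : IsMixedResolving G W) (v : V) (hv : IsCutVertex G v)
    (x y : V ⊕ G.edgeSet) (hlt : mixedDist G v x < mixedDist G v y) :
    ∃ w ∈ W \ {v}, mixedDist G w x ≠ mixedDist G w y := by
  -- extract the endpoints of `y`
  have hy : ∃ (a b : V) (ha : a ≠ v) (hb : b ≠ v),
      (G.induce {x | x ≠ v}).Reachable ⟨a, ha⟩ ⟨b, hb⟩ ∧
      (∀ z, mixedDist G z y = min (G.dist a z) (G.dist b z)) := by
    have hpos : 0 < mixedDist G v y := Nat.pos_of_ne_zero (by omega)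
    cases y with
    | inl u =>
      have hu : u ≠ v := by
        rintro rfl
        simp [mixedDist, SimpleGraph.dist_self] at hpos
      exact ⟨u, u, hu, hu, Reachable.refl _, fun z => by simp [mixedDist]⟩
    | inr e =>
      obtain ⟨e, he⟩ := e
      revert hpos
      induction e using Sym2.ind with
      | _ a b =>
        intro hpos
        simp only [mixedDist, edgeVertexDist_mk, lt_min_iff] at hpos
        have ha : a ≠ v := by
          rintro rfl; simp [SimpleGraph.dist_self] at hpos
        have hb : b ≠ v := by
          rintro rfl; simp [SimpleGraph.dist_self] at hpos
        refine ⟨a, b, ha, hb, ?_, fun z => by simp [mixedDist, edgeVertexDist_mk]⟩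
        exact Adj.reachable (by exact (G.mem_edgeSet.mp he) :
          (G.induce {x | x ≠ v}).Adj ⟨a, ha⟩ ⟨b, hb⟩)
  obtain ⟨a, b, ha, hb, hab, hyd⟩ := hy
  -- the deleted graph is disconnected but nonempty, so not preconnected
  have hnp : ¬ (G.induce {x | x ≠ v}).Preconnected := by
    intro hp
    have : Nonempty {x | x ≠ v} := ⟨⟨a, ha⟩⟩
    exact hv ⟨hp⟩
  rw [SimpleGraph.Preconnected] at hnp
  push_neg at hnp
  obtain ⟨s, t, hst⟩ := hnp
  -- pick a component containing neither `a` nor `b`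
  have hcomp : ∃ c : {x | x ≠ v},
      ¬ (G.induce {x | x ≠ v}).Reachable ⟨a, ha⟩ c := by
    by_cases hs : (G.induce {x | x ≠ v}).Reachable ⟨a, ha⟩ s
    · exact ⟨t, fun h => hst (hs.symm.trans h)⟩
    · exact ⟨s, hs⟩
  obtain ⟨c, hca⟩ := hcomp
  have hcb : ¬ (G.induce {x | x ≠ v}).Reachable ⟨b, hb⟩ c :=
    fun h => hca (hab.trans h)
  -- get an element of `W` in the component of `c`
  obtain ⟨w, hwW, hw, hwc⟩ := W_hits G hG W hW v (u := c.val) c.prop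
  have hwc' : (G.induce {x | x ≠ v}).Reachable c ⟨w, hw⟩ := hwc
  have hnaw : ¬ (G.induce {x | x ≠ v}).Reachable ⟨a, ha⟩ ⟨w, hw⟩ :=
    fun h => hca (h.trans hwc'.symm)
  have hnbw : ¬ (G.induce {x | x ≠ v}).Reachable ⟨b, hb⟩ ⟨w, hw⟩ :=
    fun h => hcb (h.trans hwc'.symm)
  have hda : G.dist a w = G.dist a v + G.dist v w :=
    dist_add_of_not_reach G hG ha hw hnaw
  have hdb : G.dist b w = G.dist b v + G.dist v w :=
    dist_add_of_not_reach G hG hb hw hnbw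
  have hyw : mixedDist G w y = mixedDist G v y + G.dist v w := by
    rw [hyd w, hyd v, hda, hdb]; omega
  have hxw : mixedDist G w x ≤ mixedDist G v x + G.dist v w :=
    mixed_triangle G hG v w x
  refine ⟨w, ⟨hwW, hw⟩, ?_⟩
  omega

/-- If `W` is a mixed resolving set of a connected graph `G` and `v` is a cut
vertex, then `W \ {v}` is also a mixed resolving set. -/
theorem stmt_11 (G : SimpleGraph V) (hG : G.Connected) (W : Set V)
    (hW : IsMixedResolving G W) (v : V) (hv : IsCutVertex G v) :
    IsMixedResolving G (W \ {v}) := by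
  intro x y hxy
  obtain ⟨w0, hw0W, hne⟩ := hW x y hxy
  by_cases hw0 : w0 = v
  · subst hw0
    rcases Nat.lt_or_ge (mixedDist G w0 x) (mixedDist G w0 y) with h | h
    · exact key G hG W hW w0 hv x y h
    · have h' : mixedDist G w0 y < mixedDist G w0 x := lt_of_le_of_ne h (Ne.symm hne)
      obtain ⟨w, hwW, hne'⟩ := key G hG W hW w0 hv y x h'
      exact ⟨w, hwW, hne'.symm⟩
  · exact ⟨w0, ⟨hw0W, hw0⟩, hne⟩
end

section
/- For any connected graph G, mdim(G) ≤ |V(G)| − ζ(G), where ζ(G) is the number of cut vertices of G. -/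
open SimpleGraph

variable {V : Type*}

/-!
Every two distinct vertices or edges are told apart by some vertex, namely a vertex of the
support of one that is not in the support of the other. If a cut vertex `w` tells `x` and `y`
apart, say `d(w, x) < d(w, y)`, then `w` is not in the support of `y`; take a component of
`G - w` that misses the (connected) support of `y`, and in it a vertex `u` farthest from `w`.
Such a `u` is not a cut vertex, and every path from the support of `y` to `u` runs through `w`,
so `d(u, y) = d(w, y) + d(w, u) > d(w, x) + d(w, u) ≥ d(u, x)`. Hence the non-cut vertices
form a mixed resolving set.
-/

section

variable {G : SimpleGraph V}

lemma SimpleGraph.Walk.reachable_induce_ne {w a b : V} (p : G.Walk a b) (hw : w ∉ p.support)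
    (ha : a ≠ w) (hb : b ≠ w) : (G.induce {x | x ≠ w}).Reachable ⟨a, ha⟩ ⟨b, hb⟩ :=
  ⟨p.induce {x | x ≠ w} fun _ hx hxw => hw (hxw ▸ hx)⟩

lemma dist_eq_add_of_not_reachable_induce (hG : G.Connected) {w a b : V} (ha : a ≠ w)
    (hb : b ≠ w) (h : ¬ (G.induce {x | x ≠ w}).Reachable ⟨a, ha⟩ ⟨b, hb⟩) :
    G.dist a b = G.dist a w + G.dist w b := by
  classical
  obtain ⟨p, -, hlen⟩ := hG.exists_path_of_dist a b
  have hwp : w ∈ p.support := by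
    by_contra hwp
    exact h (p.reachable_induce_ne hwp ha hb)
  have hsplit := congrArg Walk.length (p.take_spec hwp)
  rw [Walk.length_append] at hsplit
  have := dist_le (p.takeUntil w hwp)
  have := dist_le (p.dropUntil w hwp)
  have := hG.dist_triangle (u := a) (v := w) (w := b)
  omega

lemma not_isCutVertex_of_forall_reachable_dist_le (hG : G.Connected) {w u : V} (huw : u ≠ w)
    (hfar : ∀ z (hz : z ≠ w), (G.induce {x | x ≠ w}).Reachable ⟨u, huw⟩ ⟨z, hz⟩ →
      G.dist w z ≤ G.dist w u) :
    ¬ IsCutVertex G u := by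
  classical
  have hreach (z : V) (hz : z ≠ u) :
      (G.induce {x | x ≠ u}).Reachable ⟨z, hz⟩ ⟨w, huw.symm⟩ := by
    obtain ⟨p, hp, hlen⟩ := hG.exists_path_of_dist z w
    by_cases hu : u ∈ p.support
    · exfalso
      -- the part of `p` before `u` avoids `w`, so `z` is in the component of `u` in `G - w`,
      -- yet farther from `w`
      have hw := p.endpoint_notMem_support_takeUntil hp hu huw.symm
      have hzw : z ≠ w := fun h => hw (h ▸ (p.takeUntil u hu).start_mem_support)
      have hle := hfar z hzw ((p.takeUntil u hu).reachable_induce_ne hw hzw huw).symm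
      have hpos : (p.takeUntil u hu).length ≠ 0 := fun h => hz (Walk.eq_of_length_eq_zero h)
      have hsplit := congrArg Walk.length (p.take_spec hu)
      rw [Walk.length_append] at hsplit
      have := dist_le (p.dropUntil u hu)
      rw [dist_comm, dist_comm (u := w)] at hle
      omega
    · exact p.reachable_induce_ne hu hz huw.symm
  rw [IsCutVertex, not_not, connected_iff]
  exact ⟨fun z z' => (hreach z z.2).trans (hreach z' z'.2).symm, ⟨⟨w, huw.symm⟩⟩⟩

lemma exists_not_isCutVertex_not_reachable_induce [Finite V] (hG : G.Connected) {w c : V}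
    (hw : IsCutVertex G w) (hc : c ≠ w) :
    ∃ u, ∃ hu : u ≠ w, ¬ IsCutVertex G u ∧
      ¬ (G.induce {x | x ≠ w}).Reachable ⟨c, hc⟩ ⟨u, hu⟩ := by
  set H := G.induce {x | x ≠ w}
  obtain ⟨t, ht⟩ : ∃ t, ¬ H.Reachable ⟨c, hc⟩ t := by
    by_contra! h
    exact hw (connected_iff _ |>.2 ⟨fun s t => (h s).symm.trans (h t), ⟨⟨c, hc⟩⟩⟩)
  obtain ⟨u, htu, hmax⟩ := Set.exists_max_image {z | H.Reachable t z} (fun z => G.dist w z)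
    (Set.toFinite _) ⟨t, .refl t⟩
  exact ⟨u, u.2, not_isCutVertex_of_forall_reachable_dist_le hG u.2
    fun z hz huz => hmax _ (htu.trans huz), fun hcu => ht (hcu.trans htu.symm)⟩

def mixedSupport (G : SimpleGraph V) : V ⊕ G.edgeSet → Set V
  | Sum.inl v => {v}
  | Sum.inr e => {a | a ∈ (e : Sym2 V)}

lemma mixedSupport_nonempty (x : V ⊕ G.edgeSet) : (mixedSupport G x).Nonempty := by
  rcases x with v | ⟨e, _⟩
  · exact Set.singleton_nonempty v
  · induction e using Sym2.ind with
    | _ a b => exact ⟨a, Sym2.mem_mk_left a b⟩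

lemma mixedSupport_inr_ne_singleton (e : G.edgeSet) (a : V) :
    mixedSupport G (Sum.inr e) ≠ {a} := by
  obtain ⟨e, he⟩ := e
  induction e using Sym2.ind with
  | _ b c =>
    intro h
    have hb : b = a := (Set.ext_iff.1 h b).1 (Sym2.mem_mk_left b c)
    have hc : c = a := (Set.ext_iff.1 h c).1 (Sym2.mem_mk_right b c)
    exact G.ne_of_adj he (hb.trans hc.symm)

lemma mixedSupport_injective : Function.Injective (mixedSupport G) := by
  rintro (a | e) (b | f) h
  · rw [Set.singleton_eq_singleton_iff.1 h]
  · exact (mixedSupport_inr_ne_singleton f a h.symm).elim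
  · exact (mixedSupport_inr_ne_singleton e b h).elim
  · exact congrArg _ (Subtype.ext (Sym2.ext fun c => Set.ext_iff.1 h c))

lemma adj_of_mem_mixedSupport {x : V ⊕ G.edgeSet} {a b : V} (ha : a ∈ mixedSupport G x)
    (hb : b ∈ mixedSupport G x) (hab : a ≠ b) : G.Adj a b := by
  rcases x with v | ⟨e, he⟩
  · exact absurd (ha.trans hb.symm) hab
  · obtain rfl : e = s(a, b) := (Sym2.mem_and_mem_iff hab).1 ⟨ha, hb⟩
    exact he

lemma reachable_induce_of_mem_mixedSupport {x : V ⊕ G.edgeSet} {w a b : V}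
    (ha : a ∈ mixedSupport G x) (hb : b ∈ mixedSupport G x) (haw : a ≠ w) (hbw : b ≠ w) :
    (G.induce {x | x ≠ w}).Reachable ⟨a, haw⟩ ⟨b, hbw⟩ := by
  by_cases hab : a = b
  · subst hab
    rfl
  · exact Adj.reachable (by simpa using adj_of_mem_mixedSupport ha hb hab)

lemma mixedDist_eq_zero_iff (hG : G.Connected) {w : V} {x : V ⊕ G.edgeSet} :
    mixedDist G w x = 0 ↔ w ∈ mixedSupport G x := by
  rcases x with v | ⟨e, _⟩
  · simp [mixedDist, mixedSupport, hG.dist_eq_zero_iff, eq_comm]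
  · induction e using Sym2.ind with
    | _ a b =>
      change min (G.dist a w) (G.dist b w) = 0 ↔ w ∈ s(a, b)
      rw [Nat.min_eq_zero_iff, hG.dist_eq_zero_iff, hG.dist_eq_zero_iff, Sym2.mem_iff,
        eq_comm, eq_comm (a := b)]

lemma exists_mixedDist_ne (hG : G.Connected) {x y : V ⊕ G.edgeSet} (hxy : x ≠ y) :
    ∃ w, mixedDist G w x ≠ mixedDist G w y := by
  by_contra! h
  refine hxy (mixedSupport_injective (Set.ext fun w => ?_))
  rw [← mixedDist_eq_zero_iff hG, ← mixedDist_eq_zero_iff hG, h w]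

lemma mixedDist_le_add (hG : G.Connected) (x : V ⊕ G.edgeSet) (w u : V) :
    mixedDist G u x ≤ mixedDist G w x + G.dist w u := by
  rcases x with v | ⟨e, _⟩
  · exact hG.dist_triangle
  · induction e using Sym2.ind with
    | _ a b =>
      calc min (G.dist a u) (G.dist b u)
          ≤ min (G.dist a w + G.dist w u) (G.dist b w + G.dist w u) :=
            min_le_min hG.dist_triangle hG.dist_triangle
        _ = min (G.dist a w) (G.dist b w) + G.dist w u := min_add_add_right ..

lemma mixedDist_eq_add {x : V ⊕ G.edgeSet} {w u : V}
    (h : ∀ a ∈ mixedSupport G x, G.dist a u = G.dist a w + G.dist w u) :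
    mixedDist G u x = mixedDist G w x + G.dist w u := by
  rcases x with v | ⟨e, _⟩
  · exact h v rfl
  · induction e using Sym2.ind with
    | _ a b =>
      calc min (G.dist a u) (G.dist b u)
          = min (G.dist a w + G.dist w u) (G.dist b w + G.dist w u) := by
            rw [h a (Sym2.mem_mk_left a b), h b (Sym2.mem_mk_right a b)]
        _ = min (G.dist a w) (G.dist b w) + G.dist w u := min_add_add_right ..

lemma exists_not_isCutVertex_mixedDist_ne [Finite V] (hG : G.Connected) {w : V}
    {x y : V ⊕ G.edgeSet} (hlt : mixedDist G w x < mixedDist G w y) :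
    ∃ u, ¬ IsCutVertex G u ∧ mixedDist G u x ≠ mixedDist G u y := by
  by_cases hw : IsCutVertex G w
  swap
  · exact ⟨w, hw, hlt.ne⟩
  have hne {a : V} (ha : a ∈ mixedSupport G y) : a ≠ w := by
    rintro rfl
    rw [← mixedDist_eq_zero_iff hG] at ha
    omega
  obtain ⟨c, hc⟩ := mixedSupport_nonempty y
  obtain ⟨u, huw, hu, hcu⟩ := exists_not_isCutVertex_not_reachable_induce hG hw (hne hc)
  have hy : mixedDist G u y = mixedDist G w y + G.dist w u :=
    mixedDist_eq_add fun a ha => dist_eq_add_of_not_reachable_induce hG (hne ha) huw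
      fun hau => hcu ((reachable_induce_of_mem_mixedSupport hc ha _ _).trans hau)
  have hx := mixedDist_le_add hG x w u
  exact ⟨u, hu, by omega⟩

theorem isMixedResolving_setOf_not_isCutVertex [Finite V] (hG : G.Connected) :
    IsMixedResolving G {v | ¬ IsCutVertex G v} := by
  intro x y hxy
  obtain ⟨w, hw⟩ := exists_mixedDist_ne hG hxy
  rcases hw.lt_or_gt with h | h
  · exact exists_not_isCutVertex_mixedDist_ne hG h
  · obtain ⟨u, hu, hne⟩ := exists_not_isCutVertex_mixedDist_ne hG h
    exact ⟨u, hu, hne.symm⟩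

lemma mdim_le_card [Fintype V] {W : Finset V} (hW : IsMixedResolving G W) : mdim G ≤ W.card :=
  Nat.sInf_le ⟨W, rfl, hW⟩

end

/-- For a connected graph `G`, `mdim G ≤ |V(G)| - ζ(G)`, where `ζ(G)` is the
number of cut vertices. -/
theorem stmt_12 [Fintype V] (G : SimpleGraph V) (hG : G.Connected) :
    mdim G ≤ Fintype.card V - {v : V | IsCutVertex G v}.ncard := by
  classical
  calc mdim G ≤ {v | ¬ IsCutVertex G v}.toFinset.card :=
        mdim_le_card (by simpa using isMixedResolving_setOf_not_isCutVertex hG)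
    _ = Fintype.card V - {v : V | IsCutVertex G v}.ncard := by
        rw [Set.ncard_eq_toFinset_card', ← Finset.card_compl]
        exact congrArg _ (by ext; simp)
end

section
/- If T is a tree with at least 2 vertices, then mdim(T) equals the number of leaves of T. -/
open SimpleGraph

variable {V : Type*}

/-!
In a tree every vertex `w ≠ v` has exactly one neighbour closer to `v`. Hence, for `u ≠ v`, a
vertex `w` maximising `d(v, w)` subject to `d(v, w) = d(v, u) + d(u, w)` is a leaf, and it sees
`u` strictly closer than `v`; if `ab` is an edge missing `u` with `b` farther from `u` than `a`,
the leaf obtained from `u` and `b` sees `u` strictly closer than both `a` and `b`. These leaves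
separate all pairs of vertices and edges. Conversely, a leaf `x` with neighbour `y` is the only
vertex from which `y` and the edge `xy` look different (a shortest path from any other vertex to
`x` runs through `y`), so every mixed resolving set contains all leaves.
-/

lemma Sym2.exists_mem_notMem_of_ne {α : Type*} {e f : Sym2 α} (hf : ¬f.IsDiag)
    (hef : e ≠ f) : ∃ x ∈ f, x ∉ e := by
  induction f using Sym2.ind with | _ c d =>
  by_contra! h
  exact hef ((Sym2.mem_and_mem_iff (Sym2.mk_isDiag_iff.not.1 hf)).1
    ⟨h c (Sym2.mem_mk_left c d), h d (Sym2.mem_mk_right c d)⟩)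

namespace SimpleGraph

variable {G : SimpleGraph V}

lemma Reachable.exists_adj_dist_add_one_eq {v w : V} (hr : G.Reachable v w) (hne : v ≠ w) :
    ∃ t, G.Adj w t ∧ G.dist v t + 1 = G.dist v w := by
  obtain ⟨p, hp⟩ := hr.symm.exists_walk_length_eq_dist
  cases p with
  | nil => exact absurd rfl hne
  | @cons _ t _ hadj q =>
    obtain ⟨r, hrl⟩ := (hadj.reachable.symm.trans hr.symm).exists_walk_length_eq_dist
    have hq : G.dist t v ≤ q.length := dist_le q
    have hr' : G.dist w v ≤ (r.cons hadj).length := dist_le _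
    rw [Walk.length_cons] at hp hr'
    refine ⟨t, hadj, ?_⟩
    rw [dist_comm, dist_comm (u := v)]
    omega

lemma IsTree.eq_of_adj_of_dist_add_one_eq (hT : G.IsTree) {v w t₁ t₂ : V}
    (h₁ : G.Adj w t₁) (h₂ : G.Adj w t₂)
    (hd₁ : G.dist v t₁ + 1 = G.dist v w) (hd₂ : G.dist v t₂ + 1 = G.dist v w) : t₁ = t₂ := by
  obtain ⟨q₁, -, hq₁⟩ := hT.connected.exists_path_of_dist v t₁
  obtain ⟨q₂, -, hq₂⟩ := hT.connected.exists_path_of_dist v t₂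
  have hp₁ := (q₁.concat h₁.symm).isPath_of_length_eq_dist (by rw [Walk.length_concat, hq₁, hd₁])
  have hp₂ := (q₂.concat h₂.symm).isPath_of_length_eq_dist (by rw [Walk.length_concat, hq₂, hd₂])
  exact (Walk.concat_inj ((hT.existsUnique_path v w).unique hp₁ hp₂)).1

lemma IsTree.degree_eq_one_of_forall_adj_dist_lt (hT : G.IsTree) {v w : V}
    [Fintype (G.neighborSet w)] (hvw : v ≠ w) (h : ∀ t, G.Adj w t → G.dist v t < G.dist v w) :
    G.degree w = 1 := by
  have closer : ∀ t, G.Adj w t → G.dist v t + 1 = G.dist v w := fun t ht ↦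
    ((hT.dist_eq_dist_add_one_of_adj v ht).resolve_right (by have := h t ht; omega)).symm
  obtain ⟨t, ht, -⟩ := (hT.connected v w).exists_adj_dist_add_one_eq hvw
  exact degree_eq_one_iff_existsUnique_adj.2 ⟨t, ht, fun s hs ↦
    hT.eq_of_adj_of_dist_add_one_eq hs ht (closer s hs) (closer t ht)⟩

lemma edgeVertexDist_mk (w a b : V) :
    edgeVertexDist G w s(a, b) = min (G.dist a w) (G.dist b w) := rfl

lemma edgeVertexDist_le_dist {w x : V} {e : Sym2 V} (hx : x ∈ e) :
    edgeVertexDist G w e ≤ G.dist x w := by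
  obtain ⟨y, rfl⟩ := Sym2.mem_iff_exists.1 hx
  exact min_le_left _ _

section Leaves

variable [Fintype V] [DecidableRel G.Adj]

lemma IsTree.exists_degree_eq_one_dist_eq_add (hT : G.IsTree) {u v : V} (huv : u ≠ v) :
    ∃ w, G.degree w = 1 ∧ G.dist v w = G.dist v u + G.dist u w := by
  set S := Finset.univ.filter fun w ↦ G.dist v w = G.dist v u + G.dist u w
  obtain ⟨w, hwS, hmax⟩ := S.exists_max_image (G.dist v) ⟨u, by simp [S]⟩
  have hw : G.dist v w = G.dist v u + G.dist u w := (Finset.mem_filter.1 hwS).2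
  have hvu : 0 < G.dist v u := hT.connected.pos_dist_of_ne huv.symm
  refine ⟨w, hT.degree_eq_one_of_forall_adj_dist_lt (v := v) ?_ fun t ht ↦ ?_, hw⟩
  · rintro rfl
    rw [dist_self] at hw
    omega
  · by_contra! hle
    have hfar := (hT.dist_eq_dist_add_one_of_adj v ht).resolve_left (by omega)
    have h₁ : G.dist u t ≤ G.dist u w + G.dist w t := hT.connected.dist_triangle
    have h₂ : G.dist v t ≤ G.dist v u + G.dist u t := hT.connected.dist_triangle
    have hwt : G.dist w t = 1 := dist_eq_one_iff_adj.2 ht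
    have := hmax t (Finset.mem_filter.2 ⟨Finset.mem_univ _, by omega⟩)
    omega

lemma IsTree.exists_degree_eq_one_dist_lt (hT : G.IsTree) {u v : V} (huv : u ≠ v) :
    ∃ w, G.degree w = 1 ∧ G.dist u w < G.dist v w := by
  obtain ⟨w, hw, hd⟩ := hT.exists_degree_eq_one_dist_eq_add huv
  have := hT.connected.pos_dist_of_ne huv.symm
  exact ⟨w, hw, by omega⟩

lemma IsTree.exists_degree_eq_one_dist_lt_edgeVertexDist (hT : G.IsTree) {u : V} {e : Sym2 V}
    (he : e ∈ G.edgeSet) (hu : u ∉ e) :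
    ∃ w, G.degree w = 1 ∧ G.dist u w < edgeVertexDist G w e := by
  induction e using Sym2.ind with | _ a b =>
  have hab : G.Adj a b := he
  wlog hfar : G.dist u b = G.dist u a + 1 generalizing a b
  · rw [Sym2.eq_swap] at hu ⊢
    exact this b a (G.mem_edgeSet.2 hab.symm) hu hab.symm
      ((hT.dist_eq_dist_add_one_of_adj u hab).resolve_right hfar)
  obtain ⟨hua, hub⟩ : u ≠ a ∧ u ≠ b := by simpa [eq_comm] using hu
  obtain ⟨w, hw, hd⟩ := hT.exists_degree_eq_one_dist_eq_add hub
  have hba : G.dist b w ≤ G.dist b a + G.dist a w := hT.connected.dist_triangle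
  have h₁ : G.dist b a = 1 := dist_eq_one_iff_adj.2 hab.symm
  have h₂ := hT.connected.pos_dist_of_ne hua
  have h₃ : G.dist b u = G.dist u b := dist_comm
  refine ⟨w, hw, ?_⟩
  rw [edgeVertexDist_mk]
  omega

lemma IsTree.exists_degree_eq_one_dist_ne_edgeVertexDist (hT : G.IsTree) (u : V) {e : Sym2 V}
    (he : e ∈ G.edgeSet) : ∃ w, G.degree w = 1 ∧ G.dist u w ≠ edgeVertexDist G w e := by
  by_cases hu : u ∈ e
  · obtain ⟨b, rfl⟩ := Sym2.mem_iff_exists.1 hu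
    obtain ⟨w, hw, hd⟩ := hT.exists_degree_eq_one_dist_lt (G.ne_of_adj he).symm
    exact ⟨w, hw, (lt_of_le_of_lt (edgeVertexDist_le_dist (Sym2.mem_mk_right u b)) hd).ne'⟩
  · obtain ⟨w, hw, hd⟩ := hT.exists_degree_eq_one_dist_lt_edgeVertexDist he hu
    exact ⟨w, hw, hd.ne⟩

lemma IsTree.exists_degree_eq_one_edgeVertexDist_ne (hT : G.IsTree) {e f : Sym2 V}
    (he : e ∈ G.edgeSet) (hf : f ∈ G.edgeSet) (hef : e ≠ f) :
    ∃ w, G.degree w = 1 ∧ edgeVertexDist G w e ≠ edgeVertexDist G w f := by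
  obtain ⟨x, hxf, hxe⟩ := Sym2.exists_mem_notMem_of_ne (G.not_isDiag_of_mem_edgeSet hf) hef
  obtain ⟨w, hw, hd⟩ := hT.exists_degree_eq_one_dist_lt_edgeVertexDist he hxe
  exact ⟨w, hw, (lt_of_le_of_lt (edgeVertexDist_le_dist hxf) hd).ne'⟩

lemma IsTree.isMixedResolving_setOf_degree_eq_one (hT : G.IsTree) :
    IsMixedResolving G {w | G.degree w = 1} := by
  rintro (u | ⟨e, he⟩) (v | ⟨f, hf⟩) hne
  · exact (hT.exists_degree_eq_one_dist_lt (by simpa using hne)).imp fun _ h ↦ ⟨h.1, h.2.ne⟩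
  · exact hT.exists_degree_eq_one_dist_ne_edgeVertexDist u hf
  · exact (hT.exists_degree_eq_one_dist_ne_edgeVertexDist v he).imp fun _ h ↦ ⟨h.1, h.2.symm⟩
  · exact hT.exists_degree_eq_one_edgeVertexDist_ne he hf (by simpa using hne)

end Leaves

lemma Connected.mem_of_isMixedResolving_of_degree_eq_one (hG : G.Connected) {W : Set V}
    (hW : IsMixedResolving G W) {x : V} [Fintype (G.neighborSet x)] (hx : G.degree x = 1) :
    x ∈ W := by
  obtain ⟨y, hxy, hy⟩ := degree_eq_one_iff_existsUnique_adj.1 hx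
  obtain ⟨w, hwW, hne⟩ := hW (.inl y) (.inr ⟨s(x, y), hxy⟩) (by simp)
  change G.dist y w ≠ min (G.dist x w) (G.dist y w) at hne
  by_contra hxW
  obtain ⟨t, hxt, ht⟩ := (hG w x).exists_adj_dist_add_one_eq (ne_of_mem_of_not_mem hwW hxW)
  rw [hy t hxt, dist_comm, dist_comm (u := w)] at ht
  omega

end SimpleGraph

lemma mdim_eq_card_of_isMixedResolving_of_forall_subset [Fintype V] {G : SimpleGraph V}
    {L : Finset V} (hL : IsMixedResolving G L)
    (hsub : ∀ W : Finset V, IsMixedResolving G W → L ⊆ W) : mdim G = L.card :=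
  le_antisymm (Nat.sInf_le ⟨L, rfl, hL⟩) <|
    le_csInf ⟨L.card, L, rfl, hL⟩ fun _ ⟨W, hWn, hW⟩ ↦ hWn ▸ Finset.card_le_card (hsub W hW)

theorem stmt_16_general [Fintype V] (G : SimpleGraph V) [DecidableRel G.Adj]
    (hT : G.IsTree) :
    mdim G = (Finset.univ.filter fun v : V => G.degree v = 1).card := by
  refine mdim_eq_card_of_isMixedResolving_of_forall_subset ?_ fun W hW x hx ↦ ?_
  · simpa using hT.isMixedResolving_setOf_degree_eq_one
  · exact hT.connected.mem_of_isMixedResolving_of_degree_eq_one hW (Finset.mem_filter.1 hx).2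

/-- The mixed metric dimension of a tree with at least two vertices equals its
number of leaves. -/
theorem stmt_16 [Fintype V] (G : SimpleGraph V) [DecidableRel G.Adj]
    (hT : G.IsTree) (hn : 2 ≤ Fintype.card V) :
    mdim G = (Finset.univ.filter fun v : V => G.degree v = 1).card :=
  stmt_16_general G hT
end
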